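/- Let (U, V) be a cotorsion pair in a triangulated category T, and regard U as an extriangulated category via E(X,Z) = Hom_T(X, Z[1]). Then: (1) for every V ∈ V, the restricted functor Hom_T(-, V[2])|_U belongs to (def U)^⊥, i.e., Hom(S, Hom(-,V[2])|_U) = 0 = Ext¹(S, Hom(-,V[2])|_U) for all defects S; (2) for every U' ∈ U, the restricted functor Hom_T(-, U'[1])|_U is a defect, i.e., belongs to def U. -/

import Mathlib

/-!
A morphism from a defect `S = coker (Hom(-,Y) ⟶ Hom(-,X))` of a conflation `Z ⟶ Y ⟶ X` into
`Hom(-,M)|_U` is determined by a morphism `φ : X ⟶ M` killed by `Y ⟶ X`; the triangle makes `φ`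
factor through `X ⟶ Z⟦1⟧`, so it vanishes when `Hom(Z⟦1⟧, M) = 0`, which for `M = V⟦2⟧` is the
shifted orthogonality `Hom(U, V⟦1⟧) = 0`. Extensions of `S` by `Hom(-,M)|_U` split for every `M`:
a lift of the generator of `S` becomes killed by `Y ⟶ X` after correcting it by an element of
`Hom(X, M)`, because `Hom(-, M)` is exact on the middle of the triangle. Finally, completing a
right `U`-approximation `U₀ ⟶ U'⟦1⟧` to a triangle `U' ⟶ Y₀ ⟶ U₀ ⟶ U'⟦1⟧` gives a conflation of
`U` (the class `U` is extension closed) whose defect is `Hom(-, U'⟦1⟧)|_U`.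
-/

open CategoryTheory CategoryTheory.Limits Opposite

universe w' w v u

noncomputable section

namespace PaperStmt

variable {C : Type u} [Category.{v} C] [Preadditive C]

/-- The category of right `C`-modules (contravariant functors `C ⥤ Ab`). -/
abbrev Mod (C : Type u) [Category.{v} C] [Preadditive C] := Cᵒᵖ ⥤ AddCommGrpCat.{v}

/-- A `C`-module `F` is finitely presented if it admits a presentation
`Hom(-,Y) ⟶ Hom(-,X) ⟶ F ⟶ 0`, expressed pointwise:  there are a morphism
`f : Y ⟶ X` and an epimorphism `p : Hom(-,X) ⟶ F` whose kernel is, at every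
object `W`, exactly the set of morphisms factoring through `f`. -/
def IsFinitelyPresented (F : Mod C) : Prop :=
  ∃ (Y X : C) (f : Y ⟶ X) (p : preadditiveYoneda.obj X ⟶ F),
    (∀ W : Cᵒᵖ, Function.Surjective (p.app W)) ∧
    (∀ (W : C) (h : W ⟶ X), p.app (op W) h = 0 ↔ ∃ k : W ⟶ Y, k ≫ f = h)

/-- `C` has weak kernels: every morphism admits a weak kernel. -/
def HasWeakKernels (C : Type u) [Category.{v} C] [Preadditive C] : Prop :=
  ∀ ⦃X Y : C⦄ (f : X ⟶ Y), ∃ (K : C) (g : K ⟶ X), g ≫ f = 0 ∧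
    ∀ ⦃W : C⦄ (h : W ⟶ X), h ≫ f = 0 → ∃ t : W ⟶ K, t ≫ g = h

variable (T : Type u) [Category.{v} T] [Preadditive T] [HasZeroObject T]
  [HasShift T ℤ] [∀ n : ℤ, (CategoryTheory.shiftFunctor T n).Additive]
  [Pretriangulated T] [HasBinaryBiproducts T]

/-- A cotorsion pair `(U, V)` in a triangulated category `T`. -/
structure TriaCotorsionPair (U V : Set T) : Prop where
  isoClosed_U : ∀ ⦃X Y : T⦄, (X ≅ Y) → X ∈ U → Y ∈ U
  isoClosed_V : ∀ ⦃X Y : T⦄, (X ≅ Y) → X ∈ V → Y ∈ V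
  summand_U : ∀ ⦃X Y : T⦄, (X ⊞ Y) ∈ U → X ∈ U
  summand_V : ∀ ⦃X Y : T⦄, (X ⊞ Y) ∈ V → X ∈ V
  hom_zero : ∀ ⦃X Y : T⦄, X ∈ U → Y ∈ V → ∀ f : X ⟶ Y⟦(1 : ℤ)⟧, f = 0
  exists_triangle : ∀ X : T, ∃ (U₀ V₀ : T) (a : U₀ ⟶ X) (b : X ⟶ V₀⟦(1 : ℤ)⟧)
    (c : V₀⟦(1 : ℤ)⟧ ⟶ U₀⟦(1 : ℤ)⟧), U₀ ∈ U ∧ V₀ ∈ V ∧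
    Pretriangulated.Triangle.mk a b c ∈ Pretriangulated.distinguishedTriangles

variable {T}

/-- A conflation in the extriangulated category `U` (with
`E(X, Z) = Hom_T(X, Z⟦1⟧)`): a pair of composable morphisms of `U` fitting
into a distinguished triangle of `T`. -/
def UConflation (U : Set T) ⦃Z Y X : ObjectProperty.FullSubcategory (fun X : T => X ∈ U)⦄
    (g : Z ⟶ Y) (f : Y ⟶ X) : Prop :=
  ∃ δ : X.obj ⟶ Z.obj⟦(1 : ℤ)⟧,
    Pretriangulated.Triangle.mk (show Z.obj ⟶ Y.obj from g.hom) (show Y.obj ⟶ X.obj from f.hom) δ ∈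
      Pretriangulated.distinguishedTriangles

/-- The restriction to `U` of the functor `Hom_T(-, M)`. -/
def restrictedHom (U : Set T) (M : T) : Mod (ObjectProperty.FullSubcategory (fun X : T => X ∈ U)) :=
  (ObjectProperty.ι (fun X : T => X ∈ U)).op ⋙ preadditiveYoneda.obj M

/-- A defect over `U`: the cokernel of `Hom(-,Y)|_U ⟶ Hom(-,X)|_U` for a
conflation `Z ⟶ Y ⟶ X` of `U`, expressed pointwise. -/
def IsDefectU (U : Set T) (F : Mod (ObjectProperty.FullSubcategory (fun X : T => X ∈ U))) : Prop :=
  ∃ (Z Y X : ObjectProperty.FullSubcategory (fun X : T => X ∈ U)) (g : Z ⟶ Y) (f : Y ⟶ X),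
    UConflation U g f ∧
    ∃ p : preadditiveYoneda.obj X ⟶ F,
      (∀ W, Function.Surjective (p.app W)) ∧
      (∀ (W : ObjectProperty.FullSubcategory (fun X : T => X ∈ U)) (h : W ⟶ X),
        p.app (op W) h = 0 ↔ ∃ k : W ⟶ Y, k ≫ f = h)

/-- `Ext¹(S, F) = 0` in `mod U`, via splitting of pointwise short exact
sequences of finitely presented functors. -/
def Ext1VanishesFP {C : Type u} [Category.{v} C] [Preadditive C]
    (S F : Mod C) : Prop :=
  ∀ (G : Mod C), IsFinitelyPresented G → ∀ (i : F ⟶ G) (p : G ⟶ S),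
    (∀ W, Function.Injective (i.app W)) → (∀ W, Function.Surjective (p.app W)) →
    (∀ (W : Cᵒᵖ) (y : G.obj W), p.app W y = 0 ↔ ∃ x, i.app W x = y) →
    ∃ r : G ⟶ F, i ≫ r = 𝟙 F

section ModuleCategory

lemma epi_of_forall_surjective {A B : Mod C} (p : A ⟶ B)
    (hp : ∀ W, Function.Surjective (p.app W)) : Epi p :=
  have : ∀ W, Epi (p.app W) := fun W => (AddCommGrpCat.epi_iff_surjective _).2 (hp W)
  NatTrans.epi_of_epi_app p

lemma mono_of_forall_injective {A B : Mod C} (i : A ⟶ B)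
    (hi : ∀ W, Function.Injective (i.app W)) : Mono i :=
  have : ∀ W, Mono (i.app W) := fun W => (AddCommGrpCat.mono_iff_injective _).2 (hi W)
  NatTrans.mono_of_mono_app i

lemma exists_desc_of_surjective {A B G : Mod C} (p : A ⟶ B)
    (hp : ∀ W, Function.Surjective (p.app W)) (q : A ⟶ G)
    (hq : ∀ W a, p.app W a = 0 → q.app W a = 0) : ∃ s : B ⟶ G, p ≫ s = q := by
  have := epi_of_forall_surjective p hp
  refine ⟨Abelian.epiDesc p q ?_, Abelian.comp_epiDesc _ _ _⟩
  ext W x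
  refine hq W _ ?_
  change (kernel.ι p ≫ p).app W x = 0
  rw [kernel.condition]
  rfl

lemma exists_lift_of_injective {F G H : Mod C} (i : F ⟶ G)
    (hi : ∀ W, Function.Injective (i.app W)) (t : H ⟶ G)
    (ht : ∀ W y, ∃ x, i.app W x = t.app W y) : ∃ r : H ⟶ F, r ≫ i = t := by
  have := mono_of_forall_injective i hi
  refine ⟨Abelian.monoLift i t ?_, Abelian.monoLift_comp _ _ _⟩
  ext W y
  obtain ⟨x, hx⟩ := ht W y
  change (cokernel.π i).app W (t.app W y) = 0
  rw [← hx]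
  change (i ≫ cokernel.π i).app W x = 0
  rw [cokernel.condition]
  rfl

lemma exists_retraction_of_section {F G S : Mod C} (i : F ⟶ G) (pS : G ⟶ S)
    (hi : ∀ W, Function.Injective (i.app W))
    (hexact : ∀ (W : Cᵒᵖ) (y : G.obj W), pS.app W y = 0 ↔ ∃ x, i.app W x = y)
    (s : S ⟶ G) (hs : s ≫ pS = 𝟙 S) : ∃ r : G ⟶ F, i ≫ r = 𝟙 F := by
  have hipS : i ≫ pS = 0 := by
    ext W x
    exact (hexact W _).2 ⟨x, rfl⟩
  have hpS : (𝟙 G - pS ≫ s) ≫ pS = 0 := by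
    rw [Preadditive.sub_comp, Category.assoc, hs, Category.id_comp, Category.comp_id, sub_self]
  obtain ⟨r, hr⟩ := exists_lift_of_injective i hi (𝟙 G - pS ≫ s) fun W y =>
    (hexact W _).1 (by change ((𝟙 G - pS ≫ s) ≫ pS).app W y = 0; rw [hpS]; rfl)
  have := mono_of_forall_injective i hi
  refine ⟨r, (cancel_mono i).1 ?_⟩
  rw [Category.assoc, hr, Preadditive.comp_sub, ← Category.assoc, hipS, zero_comp, sub_zero,
    Category.comp_id, Category.id_comp]

lemma preadditiveYoneda_app_comp {X W W' : C} {G : Mod C} (q : preadditiveYoneda.obj X ⟶ G)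
    (k : W' ⟶ W) (h : W ⟶ X) : q.app (op W') (k ≫ h) = G.map k.op (q.app (op W) h) :=
  NatTrans.naturality_apply q k.op h

lemma preadditiveYoneda_app_eq_map {X W : C} {G : Mod C} (q : preadditiveYoneda.obj X ⟶ G)
    (h : W ⟶ X) : q.app (op W) h = G.map h.op (q.app (op X) (𝟙 X)) := by
  rw [← preadditiveYoneda_app_comp, Category.comp_id]

lemma preadditiveYoneda_hom_ext {X : C} {G : Mod C} {q q' : preadditiveYoneda.obj X ⟶ G}
    (h : q.app (op X) (𝟙 X) = q'.app (op X) (𝟙 X)) : q = q' := by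
  ext ⟨W⟩ k
  exact (preadditiveYoneda_app_eq_map q k).trans
    ((congrArg _ h).trans (preadditiveYoneda_app_eq_map q' k).symm)

def preadditiveYonedaMk {X : C} (G : Mod C) [G.Additive] (y : G.obj (op X)) :
    preadditiveYoneda.obj X ⟶ G where
  app W := AddCommGrpCat.ofHom
    { toFun h := G.map h.op y
      map_zero' := by
        change G.map (0 : op X ⟶ W) y = 0
        rw [G.map_zero]
        rfl
      map_add' h h' := by
        change G.map (h.op + h'.op) y = _
        rw [G.map_add]
        rfl }
  naturality W W' k := by
    ext h
    exact G.map_comp_apply _ _ _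

lemma preadditiveYonedaMk_app_id {X : C} (G : Mod C) [G.Additive] (y : G.obj (op X)) :
    (preadditiveYonedaMk G y).app (op X) (𝟙 X) = y := by
  change G.map (𝟙 X).op y = y
  rw [op_id, G.map_id]
  rfl

-- Objects of `Mod C` need not be additive functors, but quotients of representable ones are.
lemma IsFinitelyPresented.additive {G : Mod C} (hG : IsFinitelyPresented G) : G.Additive where
  map_add {W W'} a b := by
    obtain ⟨-, X, -, p, hp, -⟩ := hG
    ext y
    obtain ⟨h, rfl⟩ := hp W y
    rw [AddCommGrpCat.hom_add_apply, ← NatTrans.naturality_apply, ← NatTrans.naturality_apply,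
      ← NatTrans.naturality_apply, Functor.map_add, AddCommGrpCat.hom_add_apply, map_add]

lemma exists_section_of_presentation {X Y : C} {f : Y ⟶ X} {S G : Mod C}
    (p : preadditiveYoneda.obj X ⟶ S) (hp : ∀ W, Function.Surjective (p.app W))
    (hker : ∀ (W : C) (h : W ⟶ X), p.app (op W) h = 0 ↔ ∃ k : W ⟶ Y, k ≫ f = h)
    (pS : G ⟶ S) (Λ : preadditiveYoneda.obj X ⟶ G) (hΛ : Λ ≫ pS = p)
    (hΛf : Λ.app (op Y) f = 0) : ∃ s : S ⟶ G, s ≫ pS = 𝟙 S := by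
  obtain ⟨s, hs⟩ := exists_desc_of_surjective p hp Λ fun ⟨W⟩ h h0 => by
    obtain ⟨k, rfl⟩ := (hker W h).1 h0
    rw [preadditiveYoneda_app_comp, hΛf, map_zero]
  have := epi_of_forall_surjective p hp
  refine ⟨s, (cancel_epi p).1 ?_⟩
  rw [← Category.assoc, hs, hΛ, Category.comp_id]

end ModuleCategory

section Triangulated

open Pretriangulated

omit [HasBinaryBiproducts T]

instance (U : Set T) (M : T) : (restrictedHom U M).Additive := by
  unfold restrictedHom
  infer_instance

lemma hom_eq_zero_of_isDefectU {U : Set T}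
    {S : Mod (ObjectProperty.FullSubcategory (fun X : T => X ∈ U))} (hS : IsDefectU U S) {M : T}
    (hM : ∀ Z ∈ U, ∀ ψ : Z⟦(1 : ℤ)⟧ ⟶ M, ψ = 0)
    (α : S ⟶ restrictedHom U M) : α = 0 := by
  obtain ⟨Z, Y, X, g, f, ⟨δ, hT⟩, p, hp, hker⟩ := hS
  let φ : X.obj ⟶ M := α.app (op X) (p.app (op X) (𝟙 X))
  have hfφ : f.hom ≫ φ = 0 := by
    change (restrictedHom U M).map f.op φ = 0
    rw [← NatTrans.naturality_apply, ← preadditiveYoneda_app_eq_map,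
      (hker Y f).2 ⟨𝟙 Y, Category.id_comp f⟩, map_zero]
  have hφ : φ = 0 := by
    obtain ⟨ψ, hψ⟩ := Triangle.yoneda_exact₃ _ hT φ hfφ
    rw [hψ, hM Z.obj Z.property ψ]
    exact comp_zero
  have := epi_of_forall_surjective p hp
  exact (cancel_epi p).1 (preadditiveYoneda_hom_ext hφ)

lemma ext1VanishesFP_restrictedHom {U : Set T}
    {S : Mod (ObjectProperty.FullSubcategory (fun X : T => X ∈ U))} (hS : IsDefectU U S) (M : T) :
    Ext1VanishesFP S (restrictedHom U M) := by
  intro G hG i pS hi hpS hexact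
  obtain ⟨Z, Y, X, g, f, ⟨δ, hT⟩, p, hp, hker⟩ := hS
  have := hG.additive
  obtain ⟨y₀, hy₀⟩ := hpS (op X) (p.app (op X) (𝟙 X))
  obtain ⟨v, hv⟩ := (hexact (op Y) (G.map f.op y₀)).1 (by
    rw [NatTrans.naturality_apply, hy₀, ← preadditiveYoneda_app_eq_map,
      (hker Y f).2 ⟨𝟙 Y, Category.id_comp f⟩])
  have hgf : g ≫ f = 0 := ObjectProperty.hom_ext _ (comp_distTriang_mor_zero₁₂ _ hT)
  have hgv : g.hom ≫ v = 0 := hi (op Z) (by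
    change i.app (op Z) ((restrictedHom U M).map g.op v) = i.app (op Z) 0
    rw [NatTrans.naturality_apply, hv, ← G.map_comp_apply, ← op_comp, hgf, op_zero, G.map_zero,
      map_zero]
    rfl)
  obtain ⟨w, rfl⟩ := Triangle.yoneda_exact₂ _ hT v hgv
  let Λ := preadditiveYonedaMk G (y₀ - i.app (op X) w)
  have hΛ : Λ ≫ pS = p := preadditiveYoneda_hom_ext (by
    change pS.app (op X) (Λ.app (op X) (𝟙 X)) = p.app (op X) (𝟙 X)
    rw [preadditiveYonedaMk_app_id, map_sub, hy₀, (hexact _ _).2 ⟨w, rfl⟩, sub_zero])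
  have hΛf : Λ.app (op Y) f = 0 := by
    change G.map f.op (y₀ - i.app (op X) w) = 0
    rw [map_sub, sub_eq_zero, ← hv]
    exact NatTrans.naturality_apply i f.op w
  obtain ⟨s, hs⟩ := exists_section_of_presentation p hp hker pS Λ hΛ hΛf
  exact exists_retraction_of_section i pS hi hexact s hs

lemma isDefectU_restrictedHom_shift {U : Set T}
    {Z Y X : ObjectProperty.FullSubcategory (fun X : T => X ∈ U)} (g : Z ⟶ Y) (f : Y ⟶ X)
    (δ : X.obj ⟶ Z.obj⟦(1 : ℤ)⟧) (hT : Triangle.mk g.hom f.hom δ ∈ distinguishedTriangles)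
    (hδ : ∀ W ∈ U, ∀ ψ : W ⟶ Z.obj⟦(1 : ℤ)⟧, ∃ h : W ⟶ X.obj, h ≫ δ = ψ) :
    IsDefectU U (restrictedHom U (Z.obj⟦(1 : ℤ)⟧)) := by
  refine ⟨Z, Y, X, g, f, ⟨δ, hT⟩, preadditiveYonedaMk _ δ, ?_, fun W h => ⟨fun h0 => ?_, ?_⟩⟩
  · rintro ⟨W⟩ ψ
    obtain ⟨h, hh⟩ := hδ W.obj W.property ψ
    exact ⟨ObjectProperty.homMk h, hh⟩
  · obtain ⟨k, hk⟩ := Triangle.coyoneda_exact₃ _ hT h.hom h0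
    exact ⟨ObjectProperty.homMk k, ObjectProperty.hom_ext _ hk.symm⟩
  · rintro ⟨k, rfl⟩
    change (k.hom ≫ f.hom) ≫ δ = 0
    rw [Category.assoc, show f.hom ≫ δ = 0 from comp_distTriang_mor_zero₂₃ _ hT, comp_zero]

end Triangulated

namespace TriaCotorsionPair

open Pretriangulated

variable {U V : Set T} (hUV : TriaCotorsionPair T U V)
include hUV

lemma mem_of_forall_hom_eq_zero {Y : T} (hY : ∀ V₁ ∈ V, ∀ φ : Y ⟶ V₁⟦(1 : ℤ)⟧, φ = 0) :
    Y ∈ U := by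
  obtain ⟨U₀, V₀, a, b, c, hU₀, hV₀, hT⟩ := hUV.exists_triangle Y
  obtain ⟨e, -, -⟩ := exists_iso_binaryBiproduct_of_distTriang _ (inv_rot_of_distTriang _ hT)
    (by dsimp [Triangle.invRotate]; rw [hY V₀ hV₀ b]; exact zero_comp)
  exact hUV.summand_U (hUV.isoClosed_U (e ≪≫ biprod.braiding _ _) hU₀)

lemma mem_of_distTriang {X Y Z : T} {f : X ⟶ Y} {g : Y ⟶ Z} {h : Z ⟶ X⟦(1 : ℤ)⟧}
    (hT : Triangle.mk f g h ∈ distinguishedTriangles) (hX : X ∈ U) (hZ : Z ∈ U) : Y ∈ U :=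
  hUV.mem_of_forall_hom_eq_zero fun V₁ hV₁ φ => by
    obtain ⟨ψ, rfl⟩ := Triangle.yoneda_exact₂ _ hT φ (hUV.hom_zero hX hV₁ _)
    rw [hUV.hom_zero hZ hV₁ ψ]
    exact comp_zero

lemma hom_zero_shift {Z V' : T} (hZ : Z ∈ U) (hV' : V' ∈ V) (ψ : Z⟦(1 : ℤ)⟧ ⟶ V'⟦(2 : ℤ)⟧) :
    ψ = 0 := by
  let e : V'⟦(2 : ℤ)⟧ ≅ V'⟦(1 : ℤ)⟧⟦(1 : ℤ)⟧ := (shiftFunctorAdd' T 1 1 2 (by norm_num)).app V'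
  obtain ⟨χ, hχ⟩ := (shiftFunctor T (1 : ℤ)).map_surjective (ψ ≫ e.hom)
  rw [← cancel_mono e.hom, ← hχ, hUV.hom_zero hZ hV' χ, Functor.map_zero, zero_comp]

lemma exists_rightApproximation (X : T) :
    ∃ U₀ ∈ U, ∃ a : U₀ ⟶ X, ∀ W ∈ U, ∀ ψ : W ⟶ X, ∃ h : W ⟶ U₀, h ≫ a = ψ := by
  obtain ⟨U₀, V₀, a, b, c, hU₀, hV₀, hT⟩ := hUV.exists_triangle X
  refine ⟨U₀, hU₀, a, fun W hW ψ => ?_⟩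
  obtain ⟨h, hh⟩ := Triangle.coyoneda_exact₂ _ hT ψ (hUV.hom_zero hW hV₀ _)
  exact ⟨h, hh.symm⟩

end TriaCotorsionPair

/-- For a cotorsion pair `(U, V)` in a triangulated category:
(1) for `V' ∈ V` the functor `Hom_T(-, V'⟦2⟧)|_U` lies in `(def U)^⊥`;
(2) for `U' ∈ U` the functor `Hom_T(-, U'⟦1⟧)|_U` is a defect. -/
theorem cotorsion_perp_and_defect (U V : Set T) (hUV : TriaCotorsionPair T U V) :
    (∀ V' : T, V' ∈ V →
      ∀ S : Mod (ObjectProperty.FullSubcategory (fun X : T => X ∈ U)), IsDefectU U S →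
        (∀ α : S ⟶ restrictedHom U (V'⟦(2 : ℤ)⟧), α = 0) ∧
        Ext1VanishesFP S (restrictedHom U (V'⟦(2 : ℤ)⟧))) ∧
    (∀ U' : T, U' ∈ U → IsDefectU U (restrictedHom U (U'⟦(1 : ℤ)⟧))) := by
  refine ⟨fun V' hV' S hS => ⟨?_, ext1VanishesFP_restrictedHom hS _⟩, fun U' hU' => ?_⟩
  · exact hom_eq_zero_of_isDefectU hS fun Z hZ => hUV.hom_zero_shift hZ hV'
  obtain ⟨U₀, hU₀, a, ha⟩ := hUV.exists_rightApproximation (U'⟦(1 : ℤ)⟧)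
  obtain ⟨Y₀, f₀, g₀, hT⟩ := Pretriangulated.distinguished_cocone_triangle₂ a
  exact isDefectU_restrictedHom_shift (Z := ⟨U', hU'⟩)
    (Y := ⟨Y₀, hUV.mem_of_distTriang hT hU' hU₀⟩) (X := ⟨U₀, hU₀⟩)
    (ObjectProperty.homMk f₀) (ObjectProperty.homMk g₀) a hT ha

end PaperStmt

end
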